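/- arXiv:math-ph/0607006 — 9 statements merged into one kernel-verified Lean document; each statement's English description precedes it below -/
import Mathlib

section
/- Let k ∈ {1,2,3,4} and suppose J = (J',J₁') ∈ B_k. Then a configuration φ : V → {1,2,3} is a ground state if and only if for every vertex x ∈ V the triple (φ(x), φ(x·1), φ(x·2)) belongs to ℬ_k. -/
/-- Vertices of the semi-infinite Bethe lattice of order two: finite strings over a
two-element alphabet; the empty string is the root, and the two direct successors of
`x` are `x ++ [0]` and `x ++ [1]`. -/
abbrev BetheVertex := List (Fin 2)

/-- The energy of the cell at vertex `x` (consisting of `x` and its two direct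
successors) in the configuration `σ`. -/
def cellU (J' J₁' : ℝ) (σ : BetheVertex → Fin 3) (x : BetheVertex) : ℝ :=
  -(J' * (if σ (x ++ [0]) = σ (x ++ [1]) then 1 else 0))
    - J₁' * ((if σ x = σ (x ++ [0]) then 1 else 0) + (if σ x = σ (x ++ [1]) then 1 else 0))

/-- The minimum of the four possible cell energies
`U₁ = -2J₁'-J'`, `U₂ = -J₁'`, `U₃ = -J'`, `U₄ = 0`. -/
def minCellU (J' J₁' : ℝ) : ℝ :=
  min (min (min (-(2 * J₁') - J') (-J₁')) (-J')) 0

/-- A configuration `φ` is a ground state if every cell has minimal energy. -/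
def IsGroundState (J' J₁' : ℝ) (φ : BetheVertex → Fin 3) : Prop :=
  ∀ x : BetheVertex, cellU J' J₁' φ x = minCellU J' J₁'

/-- The four regions of the coupling-constant plane `J = (J', J₁')`, on which the
corresponding cell energy `U_k` is the unique minimum. -/
def Bregion : Fin 4 → Set (ℝ × ℝ)
  | 0 => {J | J.2 > 0 ∧ J.2 + J.1 > 0}
  | 1 => {J | J.2 > 0 ∧ J.2 + J.1 < 0}
  | 2 => {J | J.2 < 0 ∧ J.1 > 0}
  | 3 => {J | J.2 < 0 ∧ J.1 < 0}

/-- The four classes of minimal-energy cell configurations `(a, b, c)`, where `a` is the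
spin at the origin of the cell and `b`, `c` are the spins at its two successors. -/
def Bcells : Fin 4 → Set (Fin 3 × Fin 3 × Fin 3)
  | 0 => {t | t.1 = t.2.1 ∧ t.2.1 = t.2.2}
  | 1 => {t | t.2.1 ≠ t.2.2 ∧ (t.1 = t.2.1 ∨ t.1 = t.2.2)}
  | 2 => {t | t.2.1 = t.2.2 ∧ t.1 ≠ t.2.1}
  | 3 => {t | t.1 ≠ t.2.1 ∧ t.1 ≠ t.2.2 ∧ t.2.1 ≠ t.2.2}




lemma cell_eq_iff (J' J₁' : ℝ) (k : Fin 4) (hJ : (J', J₁') ∈ Bregion k) (a b c : Fin 3) :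
    (-(J' * (if b = c then (1:ℝ) else 0))
      - J₁' * ((if a = b then (1:ℝ) else 0) + (if a = c then 1 else 0)) = minCellU J' J₁')
      ↔ (a, b, c) ∈ Bcells k := by
  fin_cases k <;> simp only [Bregion, Set.mem_setOf_eq] at hJ <;> obtain ⟨h1, h2⟩ := hJ
  · rw [show minCellU J' J₁' = -(2 * J₁') - J' by
      unfold minCellU; simp only [min_def]; split_ifs <;> linarith]
    fin_cases a <;> fin_cases b <;> fin_cases c <;>
      simp only [Bcells, Set.mem_setOf_eq] <;> norm_num [Fin.ext_iff] <;>
      first | linarith | (intro h; linarith) | (constructor <;> intro h <;> linarith)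
  · rw [show minCellU J' J₁' = -J₁' by
      unfold minCellU; simp only [min_def]; split_ifs <;> linarith]
    fin_cases a <;> fin_cases b <;> fin_cases c <;>
      simp only [Bcells, Set.mem_setOf_eq] <;> norm_num [Fin.ext_iff] <;>
      first | linarith | (intro h; linarith) | (constructor <;> intro h <;> linarith)
  · rw [show minCellU J' J₁' = -J' by
      unfold minCellU; simp only [min_def]; split_ifs <;> linarith]
    fin_cases a <;> fin_cases b <;> fin_cases c <;>
      simp only [Bcells, Set.mem_setOf_eq] <;> norm_num [Fin.ext_iff] <;>
      first | linarith | (intro h; linarith) | (constructor <;> intro h <;> linarith)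
  · rw [show minCellU J' J₁' = 0 by
      unfold minCellU; simp only [min_def]; split_ifs <;> linarith]
    fin_cases a <;> fin_cases b <;> fin_cases c <;>
      simp only [Bcells, Set.mem_setOf_eq] <;> norm_num [Fin.ext_iff] <;>
      first | linarith | (intro h; linarith) | (constructor <;> intro h <;> linarith)

/-- for `J ∈ B_k`, a configuration is a ground state iff every cell
configuration belongs to `ℬ_k`. -/
theorem isGroundState_iff_cells_mem (J' J₁' : ℝ) (k : Fin 4)
    (hJ : (J', J₁') ∈ Bregion k) (φ : BetheVertex → Fin 3) :
    IsGroundState J' J₁' φ ↔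
      ∀ x : BetheVertex, (φ x, φ (x ++ [0]), φ (x ++ [1])) ∈ Bcells k := by
  unfold IsGroundState cellU
  exact forall_congr' fun x => cell_eq_iff J' J₁' k hJ _ _ _
end

section
/- Let i ∈ {1,2,3,4}, suppose J = (J',J₁') ∈ B_i, and let (a,b,c) ∈ ℬ_i be any admissible cell configuration. Then there exists a ground state φ : V → {1,2,3} whose restriction to the root cell realizes (a,b,c), i.e. φ(ε) = a, φ(1) = b and φ(2) = c, where ε is the root. -/
/-- Energy of a cell with spins `a` (origin) and `b`, `c` (successors). -/
def cellE (J' J₁' : ℝ) (a b c : Fin 3) : ℝ :=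
  -(J' * (if b = c then 1 else 0)) - J₁' * ((if a = b then 1 else 0) + (if a = c then 1 else 0))

lemma cellE_eq_min (J' J₁' : ℝ) (i : Fin 4) (hJ : (J', J₁') ∈ Bregion i)
    (a b c : Fin 3) (habc : (a, b, c) ∈ Bcells i) :
    cellE J' J₁' a b c = minCellU J' J₁' := by
  fin_cases i <;>
    simp only [Bregion, Bcells, Set.mem_setOf_eq] at hJ habc
  · obtain ⟨h1, h2⟩ := habc
    obtain ⟨hJ1, hJ2⟩ := hJ
    have hac : a = c := h1.trans h2
    have e1 : min (-(2 * J₁') - J') (-J₁') = -(2 * J₁') - J' := min_eq_left (by linarith)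
    have e2 : min (-(2 * J₁') - J') (-J') = -(2 * J₁') - J' := min_eq_left (by linarith)
    have e3 : min (-(2 * J₁') - J') 0 = -(2 * J₁') - J' := min_eq_left (by linarith)
    simp only [cellE, minCellU, e1, e2, e3, if_pos h1, if_pos h2, if_pos hac]
    ring
  · obtain ⟨h1, h2⟩ := habc
    obtain ⟨hJ1, hJ2⟩ := hJ
    have hE : cellE J' J₁' a b c = -J₁' := by
      rcases h2 with h2 | h2
      · have hac : a ≠ c := by rw [h2]; exact h1
        simp only [cellE, if_pos h2, if_neg h1, if_neg hac]; ring
      · have hab : a ≠ b := by rw [h2]; exact fun h => h1 h.symm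
        simp only [cellE, if_pos h2, if_neg h1, if_neg hab]; ring
    have e1 : min (-(2 * J₁') - J') (-J₁') = -J₁' := min_eq_right (by linarith)
    have e2 : min (-J₁') (-J') = -J₁' := min_eq_left (by linarith)
    have e3 : min (-J₁') 0 = -J₁' := min_eq_left (by linarith)
    simp only [hE, minCellU, e1, e2, e3]
  · obtain ⟨h1, h2⟩ := habc
    obtain ⟨hJ1, hJ2⟩ := hJ
    have hac : a ≠ c := fun h => h2 (h.trans h1.symm)
    have hE : cellE J' J₁' a b c = -J' := by
      simp only [cellE, if_pos h1, if_neg h2, if_neg hac]; ring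
    have e2 : min (min (-(2 * J₁') - J') (-J₁')) (-J') = -J' :=
      min_eq_right (le_min (by linarith) (by linarith))
    have e3 : min (-J') 0 = -J' := min_eq_left (by linarith)
    simp only [hE, minCellU, e2, e3]
  · obtain ⟨h1, h2, h3⟩ := habc
    obtain ⟨hJ1, hJ2⟩ := hJ
    have hE : cellE J' J₁' a b c = 0 := by
      simp only [cellE, if_neg h1, if_neg h2, if_neg h3]; ring
    have e3 : min (min (min (-(2 * J₁') - J') (-J₁')) (-J')) 0 = 0 :=
      min_eq_right (le_min (le_min (by linarith) (by linarith)) (by linarith))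
    simp only [hE, minCellU, e3]

/-- For each region, a choice of successor spins given the spin at a vertex. -/
def pickFun : Fin 4 → Fin 3 → Fin 3 × Fin 3
  | 0, s => (s, s)
  | 1, s => (s, s + 1)
  | 2, s => (s + 1, s + 1)
  | 3, s => (s + 1, s + 2)

lemma pickFun_mem (i : Fin 4) (s : Fin 3) :
    (s, (pickFun i s).1, (pickFun i s).2) ∈ Bcells i := by
  fin_cases i <;> fin_cases s <;> simp [Bcells, pickFun]

/-- The configuration, reading vertex strings reversed (so recursion is structural). -/
def psi (i : Fin 4) (a b c : Fin 3) : List (Fin 2) → Fin 3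
  | [] => a
  | [d] => if d = 0 then b else c
  | d :: e :: t =>
      let s := psi i a b c (e :: t)
      if d = 0 then (pickFun i s).1 else (pickFun i s).2

lemma psi_cons (i : Fin 4) (a b c : Fin 3) (d e : Fin 2) (t : List (Fin 2)) :
    psi i a b c (d :: e :: t) =
      if d = 0 then (pickFun i (psi i a b c (e :: t))).1
      else (pickFun i (psi i a b c (e :: t))).2 := rfl

/-- for `J ∈ B_i` and any admissible cell configuration `(a,b,c) ∈ ℬ_i`,
there is a ground state realizing `(a,b,c)` on the root cell. -/
theorem exists_groundState_extending_root_cell (J' J₁' : ℝ) (i : Fin 4)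
    (hJ : (J', J₁') ∈ Bregion i) (a b c : Fin 3) (habc : (a, b, c) ∈ Bcells i) :
    ∃ φ : BetheVertex → Fin 3, IsGroundState J' J₁' φ ∧
      φ [] = a ∧ φ [0] = b ∧ φ [1] = c := by
  refine ⟨fun x => psi i a b c x.reverse, ?_, rfl, rfl, rfl⟩
  intro x
  have hU : cellU J' J₁' (fun x => psi i a b c x.reverse) x
      = cellE J' J₁' (psi i a b c x.reverse)
          (psi i a b c ((x ++ [0]).reverse)) (psi i a b c ((x ++ [1]).reverse)) := rfl
  have hrev : ∀ d : Fin 2, (x ++ [d]).reverse = d :: x.reverse := by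
    intro d; simp
  rw [hU, hrev, hrev]
  apply cellE_eq_min J' J₁' i hJ
  cases hx : x.reverse with
  | nil => simpa [hx, psi] using habc
  | cons e t =>
      rw [psi_cons, psi_cons]
      simp only [if_pos rfl, if_neg (by decide : (1 : Fin 2) ≠ 0)]
      exact pickFun_mem i _
end

section
/- Suppose J = (J',J₁') satisfies J₁' > 0 and J₁'+J' > 0 (i.e. J ∈ B₁). Then a configuration φ : V → {1,2,3} is a ground state if and only if φ is constant; in particular the model has exactly three ground states, namely the constant configurations with values 1, 2 and 3. -/
lemma minCellU_eq (J' J₁' : ℝ) (h1 : J₁' > 0) (h2 : J₁' + J' > 0) :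
    minCellU J' J₁' = -(2 * J₁') - J' := by
  unfold minCellU
  have hA : (-(2*J₁') - J') ≤ -J₁' := by linarith
  have hB : min (-(2*J₁') - J') (-J₁') ≤ -J' :=
    le_trans (min_le_left _ _) (by linarith)
  have hC : min (min (-(2*J₁') - J') (-J₁')) (-J') ≤ 0 :=
    le_trans (min_le_left _ _) (le_trans (min_le_left _ _) (by linarith))
  rw [min_eq_left hC, min_eq_left hB, min_eq_left hA]

lemma ground_step (J' J₁' : ℝ) (h1 : J₁' > 0) (h2 : J₁' + J' > 0)
    (φ : BetheVertex → Fin 3) (hg : IsGroundState J' J₁' φ) (x : BetheVertex) :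
    φ (x ++ [0]) = φ x ∧ φ (x ++ [1]) = φ x := by
  have h := hg x
  rw [minCellU_eq J' J₁' h1 h2] at h
  unfold cellU at h
  split_ifs at h <;>
    first
      | exact ⟨‹φ x = φ (x ++ [0])›.symm, ‹φ x = φ (x ++ [1])›.symm⟩
      | exact absurd (‹φ x = φ (x ++ [0])›.symm.trans ‹φ x = φ (x ++ [1])›)
          ‹¬φ (x ++ [0]) = φ (x ++ [1])›
      | linarith

lemma ground_const (J' J₁' : ℝ) (h1 : J₁' > 0) (h2 : J₁' + J' > 0)
    (φ : BetheVertex → Fin 3) (hg : IsGroundState J' J₁' φ) (x : BetheVertex) :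
    φ x = φ [] := by
  induction x using List.reverseRecOn with
  | nil => rfl
  | append_singleton l a ih =>
    have h := ground_step J' J₁' h1 h2 φ hg l
    rw [← ih]
    fin_cases a
    · exact h.1
    · exact h.2

lemma const_ground (J' J₁' : ℝ) (h1 : J₁' > 0) (h2 : J₁' + J' > 0)
    (m : Fin 3) : IsGroundState J' J₁' (fun _ => m) := by
  intro x
  rw [minCellU_eq J' J₁' h1 h2]
  simp [cellU]
  ring

/-- for `J ∈ B₁` (i.e. `J₁' > 0` and `J₁' + J' > 0`), the ground states are
exactly the constant configurations; in particular there are exactly three of them. -/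
theorem groundStates_eq_constants (J' J₁' : ℝ) (h1 : J₁' > 0) (h2 : J₁' + J' > 0) :
    (∀ φ : BetheVertex → Fin 3,
      IsGroundState J' J₁' φ ↔ ∃ m : Fin 3, ∀ x : BetheVertex, φ x = m) ∧
    {φ : BetheVertex → Fin 3 | IsGroundState J' J₁' φ} =
      {fun _ => (0 : Fin 3), fun _ => (1 : Fin 3), fun _ => (2 : Fin 3)} := by
  have key : ∀ φ : BetheVertex → Fin 3,
      IsGroundState J' J₁' φ ↔ ∃ m : Fin 3, ∀ x : BetheVertex, φ x = m := by
    intro φ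
    constructor
    · intro hg
      exact ⟨φ [], ground_const J' J₁' h1 h2 φ hg⟩
    · rintro ⟨m, hm⟩
      have : φ = fun _ => m := funext hm
      rw [this]
      exact const_ground J' J₁' h1 h2 m
  refine ⟨key, ?_⟩
  ext φ
  simp only [Set.mem_setOf_eq, Set.mem_insert_iff, Set.mem_singleton_iff, key φ]
  constructor
  · rintro ⟨m, hm⟩
    have : φ = fun _ => m := funext hm
    fin_cases m <;> simp [this]
  · rintro (h | h | h) <;> subst h
    · exact ⟨0, fun _ => rfl⟩
    · exact ⟨1, fun _ => rfl⟩
    · exact ⟨2, fun _ => rfl⟩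
end

section
/- Suppose J = (J',J₁') belongs to B₂ ∪ B₃ ∪ B₄, i.e. either (J₁' > 0 and J₁'+J' < 0), or (J₁' < 0 and J' > 0), or (J₁' < 0 and J' < 0). Then the set of ground states of the model has cardinality of the continuum, 2^{ℵ₀}. -/
def build (step : Fin 3 → Fin 2 → Fin 2 → Fin 3) (c : List (Fin 2) → Fin 2) :
    List (Fin 2) → Fin 3
  | [] => 0
  | i :: rest => step (build step c rest) (c rest) i

lemma build_injective (step : Fin 3 → Fin 2 → Fin 2 → Fin 3)
    (hinj : ∀ v : Fin 3, step v 0 0 ≠ step v 1 0) :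
    Function.Injective (build step) := by
  intro c c' h
  funext y
  have h1 : build step c y = build step c' y := congrFun h y
  have h2 : build step c (0 :: y) = build step c' (0 :: y) := congrFun h (0 :: y)
  simp only [build] at h2
  rw [h1] at h2
  by_contra hne
  have hv : ∀ d : Fin 2, d = 0 ∨ d = 1 := by decide
  rcases hv (c y) with h3 | h3 <;> rcases hv (c' y) with h4 | h4 <;>
    rw [h3, h4] at h2 hne
  · exact hne rfl
  · exact hinj _ h2
  · exact hinj _ h2.symm
  · exact hne rfl

lemma ground_of_step (J' J₁' : ℝ) (step : Fin 3 → Fin 2 → Fin 2 → Fin 3)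
    (hcell : ∀ (v : Fin 3) (d : Fin 2),
      -(J' * (if step v d 0 = step v d 1 then 1 else 0))
        - J₁' * ((if v = step v d 0 then 1 else 0) + (if v = step v d 1 then 1 else 0))
        = minCellU J' J₁')
    (c : List (Fin 2) → Fin 2) :
    IsGroundState J' J₁' (fun x => build step c x.reverse) := by
  intro x
  have h0 : (x ++ [(0 : Fin 2)]).reverse = 0 :: x.reverse := by simp
  have h1 : (x ++ [(1 : Fin 2)]).reverse = 1 :: x.reverse := by simp
  simp only [cellU, h0, h1, build]
  exact hcell _ _

lemma ground_family (J' J₁' : ℝ)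
    (hJ : (J₁' > 0 ∧ J₁' + J' < 0) ∨ (J₁' < 0 ∧ J' > 0) ∨ (J₁' < 0 ∧ J' < 0)) :
    ∃ step : Fin 3 → Fin 2 → Fin 2 → Fin 3,
      (∀ v : Fin 3, step v 0 0 ≠ step v 1 0) ∧
      ∀ c, IsGroundState J' J₁' (fun x => build step c x.reverse) := by
  rcases hJ with ⟨h1, h2⟩ | ⟨h1, h2⟩ | ⟨h1, h2⟩
  · refine ⟨fun v d i => if i = d then v else v + 1, by decide, fun c => ground_of_step _ _ _ ?_ c⟩
    have hm : minCellU J' J₁' = -J₁' := by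
      unfold minCellU
      rw [min_def, min_def, min_def]
      split_ifs <;> linarith
    intro v d
    rw [hm]
    fin_cases v <;> fin_cases d <;>
      simp (config := { decide := true })
  · refine ⟨fun v d _ => v + 1 + Fin.castLE (by norm_num) d, by decide,
      fun c => ground_of_step _ _ _ ?_ c⟩
    have hm : minCellU J' J₁' = -J' := by
      unfold minCellU
      rw [min_def, min_def, min_def]
      split_ifs <;> linarith
    intro v d
    rw [hm]
    fin_cases v <;> fin_cases d <;>
      simp (config := { decide := true })
  · refine ⟨fun v d i => v + 1 + Fin.castLE (by norm_num) (d + i), by decide,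
      fun c => ground_of_step _ _ _ ?_ c⟩
    have hm : minCellU J' J₁' = 0 := by
      unfold minCellU
      rw [min_def, min_def, min_def]
      split_ifs <;> linarith
    intro v d
    rw [hm]
    fin_cases v <;> fin_cases d <;>
      simp (config := { decide := true })

/-- for `J ∈ B₂ ∪ B₃ ∪ B₄`, the set of ground states has the cardinality of
the continuum, `2 ^ ℵ₀`. -/
theorem groundStates_cardinality_continuum (J' J₁' : ℝ)
    (hJ : (J₁' > 0 ∧ J₁' + J' < 0) ∨ (J₁' < 0 ∧ J' > 0) ∨ (J₁' < 0 ∧ J' < 0)) :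
    Cardinal.mk ↥{φ : BetheVertex → Fin 3 | IsGroundState J' J₁' φ} =
      2 ^ Cardinal.aleph0 := by
  obtain ⟨step, hinj, hgnd⟩ := ground_family J' J₁' hJ
  apply le_antisymm
  · calc Cardinal.mk ↥{φ : BetheVertex → Fin 3 | IsGroundState J' J₁' φ}
        ≤ Cardinal.mk (BetheVertex → Fin 3) := Cardinal.mk_set_le _
      _ = (3 : Cardinal) ^ Cardinal.aleph0 := by
          rw [Cardinal.mk_arrow]
          simp [Cardinal.mk_eq_aleph0]
      _ = 2 ^ Cardinal.aleph0 := Cardinal.nat_power_aleph0 (by norm_num)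
  · have hΦ : Function.Injective
        (fun c : List (Fin 2) → Fin 2 =>
          (⟨fun x => build step c x.reverse, hgnd c⟩ :
            ↥{φ : BetheVertex → Fin 3 | IsGroundState J' J₁' φ})) := by
      intro c c' h
      apply build_injective step hinj
      funext y
      have := congrFun (congrArg Subtype.val h) y.reverse
      simpa using this
    calc (2 : Cardinal) ^ Cardinal.aleph0
        = Cardinal.mk (List (Fin 2) → Fin 2) := by
          rw [Cardinal.mk_arrow]
          simp [Cardinal.mk_eq_aleph0]
      _ ≤ _ := Cardinal.mk_le_of_injective hΦ
end

section
/- Let θ₁ > 1. Then (θ₁²−1)² − 8 > 0 if and only if θ₁ > √(1+2√2). Moreover, if θ₁ > √(1+2√2), then the numbers ξ₁ = (2((θ₁+1)²(θ₁−1)+2) − 4√((θ₁+1)³+1)) / ((θ₁²−1)²−8) and ξ₂ = (2((θ₁+1)²(θ₁−1)+2) + 4√((θ₁+1)³+1)) / ((θ₁²−1)²−8) satisfy 0 < ξ₁ < 2/(θ₁−1) < ξ₂. -/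
/-- for `θ₁ > 1`, `(θ₁²-1)² - 8 > 0` iff `θ₁ > √(1+2√2)`, and in that case
the roots `ξ₁, ξ₂` satisfy `0 < ξ₁ < 2/(θ₁-1) < ξ₂`. -/
theorem potts_xi_ordering (θ₁ : ℝ) (h : 1 < θ₁) :
    ((θ₁ ^ 2 - 1) ^ 2 - 8 > 0 ↔ θ₁ > Real.sqrt (1 + 2 * Real.sqrt 2)) ∧
    (θ₁ > Real.sqrt (1 + 2 * Real.sqrt 2) →
      let ξ₁ : ℝ := (2 * ((θ₁ + 1) ^ 2 * (θ₁ - 1) + 2) -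
          4 * Real.sqrt ((θ₁ + 1) ^ 3 + 1)) / ((θ₁ ^ 2 - 1) ^ 2 - 8)
      let ξ₂ : ℝ := (2 * ((θ₁ + 1) ^ 2 * (θ₁ - 1) + 2) +
          4 * Real.sqrt ((θ₁ + 1) ^ 3 + 1)) / ((θ₁ ^ 2 - 1) ^ 2 - 8)
      0 < ξ₁ ∧ ξ₁ < 2 / (θ₁ - 1) ∧ 2 / (θ₁ - 1) < ξ₂) := by
  have h2 : (0:ℝ) ≤ 2 := by norm_num
  have hr2 : Real.sqrt 2 ^ 2 = 2 := Real.sq_sqrt h2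
  have hr2pos : (0:ℝ) < Real.sqrt 2 := Real.sqrt_pos.mpr (by norm_num)
  have hθ0 : (0:ℝ) < θ₁ := lt_trans one_pos h
  have hiff : (θ₁ ^ 2 - 1) ^ 2 - 8 > 0 ↔ θ₁ > Real.sqrt (1 + 2 * Real.sqrt 2) := by
    have hx : θ₁ > Real.sqrt (1 + 2 * Real.sqrt 2) ↔ 1 + 2 * Real.sqrt 2 < θ₁ ^ 2 :=
      Real.sqrt_lt' hθ0
    rw [hx]
    constructor
    · intro hD
      nlinarith [sq_nonneg (θ₁ ^ 2 - 1 - 2 * Real.sqrt 2), sq_nonneg (θ₁ ^ 2 - 1)]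
    · intro hlt
      nlinarith [sq_nonneg (θ₁ ^ 2 - 1 + 2 * Real.sqrt 2)]
  refine ⟨hiff, ?_⟩
  intro hgt ξ₁ ξ₂
  have hD : (θ₁ ^ 2 - 1) ^ 2 - 8 > 0 := hiff.mpr hgt
  set s := Real.sqrt ((θ₁ + 1) ^ 3 + 1) with hs
  have hsnn : (0:ℝ) ≤ s := Real.sqrt_nonneg _
  have hs2 : s ^ 2 = (θ₁ + 1) ^ 3 + 1 := Real.sq_sqrt (by nlinarith)
  have hθ1 : (0:ℝ) < θ₁ - 1 := by linarith
  constructor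
  · apply div_pos _ hD
    show 0 < 2 * ((θ₁ + 1) ^ 2 * (θ₁ - 1) + 2) - 4 * s
    have hkey : (4 * s) ^ 2 < (2 * ((θ₁ + 1) ^ 2 * (θ₁ - 1) + 2)) ^ 2 := by
      nlinarith [sq_nonneg (θ₁ - 1), sq_nonneg (θ₁ + 1), sq_nonneg ((θ₁+1)^2*(θ₁-1)), hD]
    have hApos : (0:ℝ) < 2 * ((θ₁ + 1) ^ 2 * (θ₁ - 1) + 2) := by
      nlinarith [sq_nonneg (θ₁ + 1)]
    nlinarith [hkey, hApos, hsnn]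
  constructor
  · rw [div_lt_div_iff₀ hD hθ1]
    have hkey : (θ₁ + 3) < s * (θ₁ - 1) := by
      have h1 : (θ₁ + 3) ^ 2 < (s * (θ₁ - 1)) ^ 2 := by
        have : (s * (θ₁ - 1)) ^ 2 = ((θ₁ + 1) ^ 3 + 1) * (θ₁ - 1) ^ 2 := by
          rw [mul_pow, hs2]
        rw [this]
        nlinarith [hD, sq_nonneg (θ₁ - 1), sq_nonneg (θ₁ ^ 2 - 1)]
      nlinarith [mul_nonneg hsnn hθ1.le]
    nlinarith [hkey]
  · rw [div_lt_div_iff₀ hθ1 hD]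
    nlinarith [mul_nonneg hsnn hθ1.le]
end

section
/- Let θ₁ > √(1+2√2) and θ > ξ₂, where ξ₂ = (2((θ₁+1)²(θ₁−1)+2) + 4√((θ₁+1)³+1)) / ((θ₁²−1)²−8). Then the quadratic Q(u) = θu² + (θ₁+1)(θ(1−θ₁)+2)u + 2(θ+1) has two distinct real roots u₂* < u₁*, both of which are positive. -/
/-!
Since `Q(0) > 0` and `Q` has positive leading coefficient, both roots are positive as soon as
the middle coefficient is negative and the discriminant is positive. Multiplied by
`A = (θ₁² - 1)² - 8 > 0`, the discriminant becomes `(Aθ - 2K)² - 16((θ₁ + 1)³ + 1)` with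
`K = (θ₁ + 1)²(θ₁ - 1) + 2`, and `θ > ξ₂` says exactly that `Aθ - 2K > 4√((θ₁ + 1)³ + 1)`.
-/

open Real

theorem exists_two_pos_roots_of_discrim_pos {a b c : ℝ} (ha : 0 < a) (hb : b < 0) (hc : 0 < c)
    (hD : 0 < discrim a b c) :
    ∃ u₁ u₂ : ℝ, 0 < u₂ ∧ u₂ < u₁ ∧ a * u₂ ^ 2 + b * u₂ + c = 0 ∧ a * u₁ ^ 2 + b * u₁ + c = 0 := by
  set s := √(discrim a b c)
  have hs : discrim a b c = s * s := (mul_self_sqrt hD.le).symm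
  have hs_pos : 0 < s := sqrt_pos.2 hD
  have hs_lt : s < -b := by
    rw [discrim] at hs
    nlinarith
  have root (x : ℝ) (hx : x = (-b + s) / (2 * a) ∨ x = (-b - s) / (2 * a)) :
      a * x ^ 2 + b * x + c = 0 := by
    rw [pow_two]
    exact (quadratic_eq_zero_iff ha.ne' hs x).2 hx
  refine ⟨(-b + s) / (2 * a), (-b - s) / (2 * a), ?_, ?_, root _ (.inr rfl), root _ (.inl rfl)⟩
  · exact div_pos (by linarith) (by positivity)
  · exact div_lt_div_of_pos_right (by linarith) (by positivity)

section Potts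

variable {θ θ₁ : ℝ}

theorem two_mul_sqrt_two_lt_sq_sub_one (hθ₁ : √(1 + 2 * √2) < θ₁) : 2 * √2 < θ₁ ^ 2 - 1 := by
  have hθ₁_pos : 0 < θ₁ := lt_of_le_of_lt (sqrt_nonneg _) hθ₁
  linarith [(sqrt_lt' hθ₁_pos).1 hθ₁]

theorem one_lt_of_sqrt_one_add_two_mul_sqrt_two_lt (hθ₁ : √(1 + 2 * √2) < θ₁) : 1 < θ₁ := by
  have hθ₁_pos : 0 < θ₁ := lt_of_le_of_lt (sqrt_nonneg _) hθ₁
  nlinarith [two_mul_sqrt_two_lt_sq_sub_one hθ₁, sqrt_nonneg 2]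

theorem sq_sq_sub_one_sub_eight_pos (hθ₁ : √(1 + 2 * √2) < θ₁) : 0 < (θ₁ ^ 2 - 1) ^ 2 - 8 := by
  have hlt := two_mul_sqrt_two_lt_sq_sub_one hθ₁
  have hsq := sq_lt_sq' (by linarith [sqrt_nonneg 2]) hlt
  nlinarith [sq_sqrt (zero_le_two : (0 : ℝ) ≤ 2)]

theorem potts_coeff_signs (hθ₁ : 1 < θ₁) (hA : 0 < (θ₁ ^ 2 - 1) ^ 2 - 8)
    (hθ : 2 * ((θ₁ + 1) ^ 2 * (θ₁ - 1) + 2) < θ * ((θ₁ ^ 2 - 1) ^ 2 - 8)) :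
    0 < θ ∧ (θ₁ + 1) * (θ * (1 - θ₁) + 2) < 0 := by
  have hK : 0 < 2 * ((θ₁ + 1) ^ 2 * (θ₁ - 1) + 2) := by
    have : 0 < θ₁ - 1 := by linarith
    positivity
  have hθ_pos : 0 < θ := pos_of_mul_pos_left (hK.trans hθ) hA.le
  -- `hθ` rearranges to `(θ₁ + 1)²(θ₁ - 1)(θ(θ₁ - 1) - 2) > 8θ + 4`.
  have hθ_gt : 2 < θ * (θ₁ - 1) := by
    nlinarith [mul_pos hθ_pos (show (0 : ℝ) < (θ₁ + 1) ^ 2 by positivity)]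
  exact ⟨hθ_pos, by nlinarith⟩

/-- Viewed as a quadratic in `θ`, the right-hand side has the larger root `ξ₂`. -/
theorem mul_discrim_potts (θ θ₁ : ℝ) :
    ((θ₁ ^ 2 - 1) ^ 2 - 8) * discrim θ ((θ₁ + 1) * (θ * (1 - θ₁) + 2)) (2 * (θ + 1)) =
      (((θ₁ ^ 2 - 1) ^ 2 - 8) * θ - 2 * ((θ₁ + 1) ^ 2 * (θ₁ - 1) + 2)) ^ 2 -
        16 * ((θ₁ + 1) ^ 3 + 1) := by
  rw [discrim]
  ring

theorem discrim_potts_pos (hθ₁ : 1 < θ₁) (hA : 0 < (θ₁ ^ 2 - 1) ^ 2 - 8)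
    (hθ : 2 * ((θ₁ + 1) ^ 2 * (θ₁ - 1) + 2) + 4 * √((θ₁ + 1) ^ 3 + 1) <
      θ * ((θ₁ ^ 2 - 1) ^ 2 - 8)) :
    0 < discrim θ ((θ₁ + 1) * (θ * (1 - θ₁) + 2)) (2 * (θ + 1)) := by
  have hR : √((θ₁ + 1) ^ 3 + 1) ^ 2 = (θ₁ + 1) ^ 3 + 1 := sq_sqrt (by positivity)
  have hsq := sq_lt_sq' (by linarith [sqrt_nonneg ((θ₁ + 1) ^ 3 + 1)])
    (show 4 * √((θ₁ + 1) ^ 3 + 1) < ((θ₁ ^ 2 - 1) ^ 2 - 8) * θ -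
      2 * ((θ₁ + 1) ^ 2 * (θ₁ - 1) + 2) by linarith)
  refine pos_of_mul_pos_right ?_ hA.le
  rw [mul_discrim_potts]
  nlinarith

end Potts

/-- for `θ₁ > √(1+2√2)` and `θ > ξ₂`, the quadratic
`Q(u) = θu² + (θ₁+1)(θ(1-θ₁)+2)u + 2(θ+1)` has two distinct positive real roots. -/
theorem potts_quadratic_two_positive_roots (θ θ₁ : ℝ)
    (hθ₁ : θ₁ > Real.sqrt (1 + 2 * Real.sqrt 2))
    (hθ : θ > (2 * ((θ₁ + 1) ^ 2 * (θ₁ - 1) + 2) +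
        4 * Real.sqrt ((θ₁ + 1) ^ 3 + 1)) / ((θ₁ ^ 2 - 1) ^ 2 - 8)) :
    ∃ u₁ u₂ : ℝ, 0 < u₂ ∧ u₂ < u₁ ∧
      θ * u₂ ^ 2 + (θ₁ + 1) * (θ * (1 - θ₁) + 2) * u₂ + 2 * (θ + 1) = 0 ∧
      θ * u₁ ^ 2 + (θ₁ + 1) * (θ * (1 - θ₁) + 2) * u₁ + 2 * (θ + 1) = 0 := by
  have hθ₁_gt_one := one_lt_of_sqrt_one_add_two_mul_sqrt_two_lt hθ₁
  have hA := sq_sq_sub_one_sub_eight_pos hθ₁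
  have hθ' := (div_lt_iff₀ hA).1 hθ
  obtain ⟨hθ_pos, hb⟩ := potts_coeff_signs (θ := θ) hθ₁_gt_one hA
    (by linarith [sqrt_nonneg ((θ₁ + 1) ^ 3 + 1)])
  exact exists_two_pos_roots_of_discrim_pos hθ_pos hb (by linarith)
    (discrim_potts_pos hθ₁_gt_one hA hθ')
end

section
/- Let θ, θ₁ > 0 and define f(u; θ, θ₁) = (θ₁²θu² + 4θ₁u + 2(θ+1)) / (θu² + 2(θ₁+1)u + θ₁²θ + 2θ₁ + θ). Then the derivative of f(·; θ, θ₁) at u = 1 satisfies f'(1; θ, θ₁) > 1 if and only if θ₁ > 2 and θ > 2/(θ₁−2). -/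
section

variable {𝕜 : Type*} [NontriviallyNormedField 𝕜]

theorem hasDerivAt_quadratic (a b c x : 𝕜) :
    HasDerivAt (fun u => a * u ^ 2 + b * u + c) (2 * a * x + b) x := by
  have h := (((hasDerivAt_pow 2 x).const_mul a).add ((hasDerivAt_id x).const_mul b)).add_const c
  exact h.congr_deriv (by simp; ring)

theorem HasDerivAt.div_of_eq {N D : 𝕜 → 𝕜} {n d x : 𝕜} (hN : HasDerivAt N n x)
    (hD : HasDerivAt D d x) (hND : N x = D x) (h0 : D x ≠ 0) :
    HasDerivAt (fun u => N u / D u) ((n - d) / D x) x :=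
  (hN.div hD h0).congr_deriv (by rw [hND]; field_simp)

end

theorem lt_mul_iff_pos_and_div_lt {α : Type*} [Field α] [LinearOrder α] [IsStrictOrderedRing α]
    {a b c : α} (ha : 0 < a) (hc : 0 < c) :
    c < a * b ↔ 0 < b ∧ c / b < a := by
  constructor
  · intro h
    have hb : 0 < b := pos_of_mul_pos_right (hc.trans h) ha.le
    exact ⟨hb, (div_lt_iff₀ hb).2 h⟩
  · rintro ⟨hb, h⟩
    exact (div_lt_iff₀ hb).1 h

/-- the derivative at `u = 1` of the recursion function `f` exceeds `1`
iff `θ₁ > 2` and `θ > 2/(θ₁ - 2)` (instability of the trivial fixed point). -/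
theorem potts_instability_criterion (θ θ₁ : ℝ) (hθ : 0 < θ) (hθ₁ : 0 < θ₁) :
    deriv (fun u : ℝ =>
        (θ₁ ^ 2 * θ * u ^ 2 + 4 * θ₁ * u + 2 * (θ + 1)) /
          (θ * u ^ 2 + 2 * (θ₁ + 1) * u + θ₁ ^ 2 * θ + 2 * θ₁ + θ)) 1 > 1 ↔
      θ₁ > 2 ∧ θ > 2 / (θ₁ - 2) := by
  -- `u = 1` is a fixed point: numerator and denominator agree there.
  have hden : (fun u : ℝ => θ * u ^ 2 + 2 * (θ₁ + 1) * u + θ₁ ^ 2 * θ + 2 * θ₁ + θ) =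
      fun u => θ * u ^ 2 + 2 * (θ₁ + 1) * u + (θ₁ ^ 2 * θ + 2 * θ₁ + θ) := by
    funext u; ring
  have hderiv := ((hasDerivAt_quadratic (θ₁ ^ 2 * θ) (4 * θ₁) (2 * (θ + 1)) 1).div_of_eq
    (hden ▸ hasDerivAt_quadratic θ (2 * (θ₁ + 1)) (θ₁ ^ 2 * θ + 2 * θ₁ + θ) 1)
    (by ring) (by positivity)).deriv
  rw [hderiv, gt_iff_lt, one_lt_div (by positivity), gt_iff_lt, gt_iff_lt,
    show (2 : ℝ) < θ₁ ↔ 0 < θ₁ - 2 from sub_pos.symm, ← lt_mul_iff_pos_and_div_lt hθ two_pos]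
  -- `f'(1) - 1` has the sign of `(θ₁ + 2) (θ (θ₁ - 2) - 2)`.
  have hθ₁2 : 0 < θ₁ + 2 := by linarith
  constructor
  · intro h
    nlinarith
  · intro h
    nlinarith [mul_pos hθ₁2 (sub_pos.2 h)]
end

section
/- Let θ₁ > 2 and θ > max{2/(θ₁−2), ξ₂}, where ξ₂ = (2((θ₁+1)²(θ₁−1)+2) + 4√((θ₁+1)³+1)) / ((θ₁²−1)²−8) (well defined since θ₁ > 2 implies (θ₁²−1)² > 8). Define f(u; θ, θ₁) = (θ₁²θu² + 4θ₁u + 2(θ+1)) / (θu² + 2(θ₁+1)u + θ₁²θ + 2θ₁ + θ) and Q(u) = θu² + (θ₁+1)(θ(1−θ₁)+2)u + 2(θ+1). Then Q has two distinct positive roots u₂* < u₁* with u₂* < 1 < u₁*, and the set of fixed points of f(·; θ, θ₁) in (0, ∞) is exactly {u₂*, 1, u₁*}. -/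
/-!
Clearing the (positive) denominator, `f u = u` becomes `(u - 1) · Q(u) = 0`, so the positive fixed
points are `1` and the positive roots of `Q`. Since `Q(1) = (θ₁ + 2)(2 - θ(θ₁ - 2))`, the bound
`θ > 2/(θ₁ - 2)` makes `Q(1) < 0`; as `Q` has positive leading coefficient, its roots lie on either
side of `1`, and `Q(0) = 2(θ + 1) > 0` forces both of them to be positive.
-/

theorem exists_quadratic_eq_mul_of_neg {a b c t : ℝ} (ha : 0 < a)
    (ht : a * t ^ 2 + b * t + c < 0) :
    ∃ r₁ r₂ : ℝ, r₂ < t ∧ t < r₁ ∧ ∀ x, a * x ^ 2 + b * x + c = a * (x - r₁) * (x - r₂) := by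
  have hdisc : 0 < discrim a b c := by
    have : discrim a b c = (2 * a * t + b) ^ 2 - 4 * a * (a * t ^ 2 + b * t + c) := by
      unfold discrim; ring
    rw [this]
    nlinarith [sq_nonneg (2 * a * t + b), mul_pos ha (neg_pos.2 ht)]
  set s := Real.sqrt (discrim a b c)
  have hs : 0 < s := Real.sqrt_pos.2 hdisc
  have hs2 : s ^ 2 = b ^ 2 - 4 * a * c := Real.sq_sqrt hdisc.le
  have hsplit : ∀ x, a * x ^ 2 + b * x + c
      = a * (x - (-b + s) / (2 * a)) * (x - (-b - s) / (2 * a)) := by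
    intro x
    field_simp
    linear_combination hs2
  have hlt : (-b - s) / (2 * a) < (-b + s) / (2 * a) := by gcongr; linarith
  have hneg : (t - (-b + s) / (2 * a)) * (t - (-b - s) / (2 * a)) < 0 := by
    rw [hsplit, mul_assoc] at ht
    exact (pos_iff_neg_of_mul_neg ht).1 ha
  refine ⟨_, _, ?_, ?_, hsplit⟩ <;> nlinarith

namespace Potts

noncomputable def f (θ θ₁ u : ℝ) : ℝ :=
  (θ₁ ^ 2 * θ * u ^ 2 + 4 * θ₁ * u + 2 * (θ + 1)) /
    (θ * u ^ 2 + 2 * (θ₁ + 1) * u + θ₁ ^ 2 * θ + 2 * θ₁ + θ)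

def Q (θ θ₁ u : ℝ) : ℝ :=
  θ * u ^ 2 + (θ₁ + 1) * (θ * (1 - θ₁) + 2) * u + 2 * (θ + 1)

theorem Q_one (θ θ₁ : ℝ) : Q θ θ₁ 1 = (θ₁ + 2) * (2 - θ * (θ₁ - 2)) := by
  unfold Q; ring

theorem f_eq_self_iff {θ θ₁ u : ℝ} (hθ : 0 < θ) (hθ₁ : 0 < θ₁) (hu : 0 < u) :
    f θ θ₁ u = u ↔ (u - 1) * Q θ θ₁ u = 0 := by
  have hden : 0 < θ * u ^ 2 + 2 * (θ₁ + 1) * u + θ₁ ^ 2 * θ + 2 * θ₁ + θ := by positivity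
  rw [f, Q, div_eq_iff hden.ne']
  constructor <;> intro h <;> linear_combination -h

end Potts

open Potts in
/-- in the phase-transition regime `θ₁ > 2`, `θ > max{2/(θ₁-2), ξ₂}`,
the quadratic `Q` has two positive roots `u₂* < 1 < u₁*`, and the positive fixed points
of the recursion `f` are exactly `{u₂*, 1, u₁*}`. -/
theorem potts_three_fixed_points (θ θ₁ : ℝ) (hθ₁ : 2 < θ₁)
    (hθ : θ > max (2 / (θ₁ - 2))
        ((2 * ((θ₁ + 1) ^ 2 * (θ₁ - 1) + 2) +
          4 * Real.sqrt ((θ₁ + 1) ^ 3 + 1)) / ((θ₁ ^ 2 - 1) ^ 2 - 8))) :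
    ∃ u₁ u₂ : ℝ, 0 < u₂ ∧ u₂ < 1 ∧ 1 < u₁ ∧
      θ * u₂ ^ 2 + (θ₁ + 1) * (θ * (1 - θ₁) + 2) * u₂ + 2 * (θ + 1) = 0 ∧
      θ * u₁ ^ 2 + (θ₁ + 1) * (θ * (1 - θ₁) + 2) * u₁ + 2 * (θ + 1) = 0 ∧
      {u : ℝ | 0 < u ∧
          (θ₁ ^ 2 * θ * u ^ 2 + 4 * θ₁ * u + 2 * (θ + 1)) /
            (θ * u ^ 2 + 2 * (θ₁ + 1) * u + θ₁ ^ 2 * θ + 2 * θ₁ + θ) = u} =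
        {u₂, 1, u₁} := by
  show ∃ u₁ u₂ : ℝ, 0 < u₂ ∧ u₂ < 1 ∧ 1 < u₁ ∧ Q θ θ₁ u₂ = 0 ∧ Q θ θ₁ u₁ = 0 ∧
    {u | 0 < u ∧ f θ θ₁ u = u} = {u₂, 1, u₁}
  have hθ₁2 : 0 < θ₁ - 2 := by linarith
  have hθ₁0 : 0 < θ₁ := by linarith
  have hθ_gt : 2 < θ * (θ₁ - 2) := (div_lt_iff₀ hθ₁2).1 ((le_max_left _ _).trans_lt hθ)
  have hθ0 : 0 < θ := pos_of_mul_pos_left (by linarith) hθ₁2.le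
  have hQ1 : Q θ θ₁ 1 < 0 := by
    rw [Q_one]; exact mul_neg_of_pos_of_neg (by linarith) (by linarith)
  obtain ⟨u₁, u₂, hu₂1, hu₁1, hQ⟩ := exists_quadratic_eq_mul_of_neg hθ0 (t := 1) hQ1
  replace hQ : ∀ u, Q θ θ₁ u = θ * (u - u₁) * (u - u₂) := hQ
  have hu₂ : 0 < u₂ := by
    have hQ0 : 0 < θ * u₁ * u₂ := by
      have := hQ 0
      simp only [Q] at this
      linarith
    exact (pos_iff_pos_of_mul_pos hQ0).1 (by positivity)
  refine ⟨u₁, u₂, hu₂, hu₂1, hu₁1, by simp [hQ], by simp [hQ], ?_⟩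
  ext u
  simp only [Set.mem_ofPred_eq, Set.mem_insert_iff, Set.mem_singleton_iff]
  constructor
  · rintro ⟨hu, hfix⟩
    rw [f_eq_self_iff hθ0 hθ₁0 hu, hQ] at hfix
    simp only [mul_eq_zero, sub_eq_zero, hθ0.ne', false_or] at hfix
    tauto
  · rintro (rfl | rfl | rfl) <;> refine ⟨by linarith, ?_⟩ <;>
      rw [f_eq_self_iff hθ0 hθ₁0 (by linarith), hQ] <;> ring
end

section
/- Let J > 0 and J₁ > 0 be fixed, and for β > 0 set θ(β) = e^{βJ} and θ₁(β) = e^{βJ₁}. Then there exists β₀ > 0 such that for every β > β₀ the quadratic Q_β(u) = θ(β)u² + (θ₁(β)+1)(θ(β)(1−θ₁(β))+2)u + 2(θ(β)+1) has two distinct positive roots u₂*(β) < u₁*(β); these roots satisfy u₁*(β)·u₂*(β) = 2(θ(β)+1)/θ(β), and as β → ∞ one has u₁*(β) → ∞ and u₂*(β) → 0. -/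
/-!
For `θ ≥ 1` and `θ₁ ≥ 4` the linear coefficient `b` of `Q_β` is at most `-θ(θ₁+1)(θ₁-3) ≤ -5θ`,
so the discriminant is positive and, as the constant and leading coefficients are positive,
both roots are positive. The larger root is at least `-b/(2θ) ≥ θ₁ - 3 → ∞`, and by Vieta the
smaller one is `2(θ+1)/θ ≤ 4` divided by the larger one, hence tends to `0`.
-/

open Filter

noncomputable def largeRoot (a b c : ℝ) : ℝ := (-b + √(discrim a b c)) / (2 * a)

noncomputable def smallRoot (a b c : ℝ) : ℝ := (-b - √(discrim a b c)) / (2 * a)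

section QuadraticRoots

variable {a b c : ℝ}

theorem largeRoot_isRoot (ha : a ≠ 0) (hd : 0 ≤ discrim a b c) :
    a * largeRoot a b c ^ 2 + b * largeRoot a b c + c = 0 := by
  rw [sq]
  exact (quadratic_eq_zero_iff ha (Real.mul_self_sqrt hd).symm _).2 (Or.inl rfl)

theorem smallRoot_isRoot (ha : a ≠ 0) (hd : 0 ≤ discrim a b c) :
    a * smallRoot a b c ^ 2 + b * smallRoot a b c + c = 0 := by
  rw [sq]
  exact (quadratic_eq_zero_iff ha (Real.mul_self_sqrt hd).symm _).2 (Or.inr rfl)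

theorem largeRoot_mul_smallRoot (ha : a ≠ 0) (hd : 0 ≤ discrim a b c) :
    largeRoot a b c * smallRoot a b c = c / a := by
  have hs : √(discrim a b c) ^ 2 = b ^ 2 - 4 * a * c := Real.sq_sqrt hd
  unfold largeRoot smallRoot
  field_simp
  linear_combination -hs

theorem smallRoot_lt_largeRoot (ha : 0 < a) (hd : 0 < discrim a b c) :
    smallRoot a b c < largeRoot a b c := by
  have hs : 0 < √(discrim a b c) := Real.sqrt_pos.2 hd
  exact div_lt_div_of_pos_right (by linarith) (by positivity)

theorem neg_div_le_largeRoot (ha : 0 < a) : -b / (2 * a) ≤ largeRoot a b c :=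
  div_le_div_of_nonneg_right (le_add_of_nonneg_right (Real.sqrt_nonneg _)) (by positivity)

theorem smallRoot_pos (ha : 0 < a) (hb : b < 0) (hc : 0 < c) : 0 < smallRoot a b c := by
  have hs : √(discrim a b c) < -b := by
    rw [Real.sqrt_lt' (by linarith), discrim]
    nlinarith
  exact div_pos (by linarith) (by positivity)

theorem quadratic_roots_spec (ha : 0 < a) (hb : b < 0) (hc : 0 < c) (hd : 0 < discrim a b c) :
    0 < smallRoot a b c ∧ smallRoot a b c < largeRoot a b c ∧
      a * smallRoot a b c ^ 2 + b * smallRoot a b c + c = 0 ∧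
      a * largeRoot a b c ^ 2 + b * largeRoot a b c + c = 0 ∧
      largeRoot a b c * smallRoot a b c = c / a :=
  ⟨smallRoot_pos ha hb hc, smallRoot_lt_largeRoot ha hd, smallRoot_isRoot ha.ne' hd.le,
    largeRoot_isRoot ha.ne' hd.le, largeRoot_mul_smallRoot ha.ne' hd.le⟩

end QuadraticRoots

section Potts

def pottsLinearCoeff (θ θ₁ : ℝ) : ℝ := (θ₁ + 1) * (θ * (1 - θ₁) + 2)

variable {θ θ₁ : ℝ}

theorem pottsLinearCoeff_le (hθ : 1 ≤ θ) (hθ₁ : -1 ≤ θ₁) :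
    pottsLinearCoeff θ θ₁ ≤ -(θ * (θ₁ + 1) * (θ₁ - 3)) := by
  unfold pottsLinearCoeff
  nlinarith

theorem pottsLinearCoeff_le_neg_five_mul (hθ : 1 ≤ θ) (hθ₁ : 4 ≤ θ₁) :
    pottsLinearCoeff θ θ₁ ≤ -(5 * θ) := by
  nlinarith [pottsLinearCoeff_le hθ (by linarith : -1 ≤ θ₁),
    mul_nonneg (by linarith : 0 ≤ θ)
      (mul_nonneg (by linarith : 0 ≤ θ₁ - 4) (by linarith : 0 ≤ θ₁ + 2))]

theorem pottsLinearCoeff_neg (hθ : 1 ≤ θ) (hθ₁ : 4 ≤ θ₁) : pottsLinearCoeff θ θ₁ < 0 := by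
  linarith [pottsLinearCoeff_le_neg_five_mul hθ hθ₁]

theorem pottsLinearCoeff_discrim_pos (hθ : 1 ≤ θ) (hθ₁ : 4 ≤ θ₁) :
    0 < discrim θ (pottsLinearCoeff θ θ₁) (2 * (θ + 1)) := by
  have hb := pottsLinearCoeff_le_neg_five_mul hθ hθ₁
  rw [discrim]
  nlinarith

theorem sub_three_le_pottsLargeRoot (hθ : 1 ≤ θ) (hθ₁ : 3 ≤ θ₁) :
    θ₁ - 3 ≤ largeRoot θ (pottsLinearCoeff θ θ₁) (2 * (θ + 1)) := by
  refine le_trans ?_ (neg_div_le_largeRoot (by linarith))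
  rw [le_div_iff₀ (by linarith)]
  nlinarith [pottsLinearCoeff_le hθ (by linarith : -1 ≤ θ₁),
    mul_nonneg (mul_nonneg (by linarith : 0 ≤ θ) (by linarith : 0 ≤ θ₁ - 3))
      (by linarith : 0 ≤ θ₁ - 1)]

theorem pottsSmallRoot_le_four_div (hθ : 1 ≤ θ) (hθ₁ : 4 ≤ θ₁) :
    smallRoot θ (pottsLinearCoeff θ θ₁) (2 * (θ + 1)) ≤
      4 / largeRoot θ (pottsLinearCoeff θ θ₁) (2 * (θ + 1)) := by
  have hu₁ : 0 < largeRoot θ (pottsLinearCoeff θ θ₁) (2 * (θ + 1)) := by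
    linarith [sub_three_le_pottsLargeRoot hθ (by linarith : 3 ≤ θ₁)]
  have hprod := largeRoot_mul_smallRoot (by linarith : θ ≠ 0)
    (pottsLinearCoeff_discrim_pos hθ hθ₁).le
  rw [le_div_iff₀ hu₁, mul_comm, hprod, div_le_iff₀ (by linarith)]
  linarith

end Potts

/-- for fixed couplings `J, J₁ > 0` with Boltzmann factors
`θ(β) = e^{βJ}`, `θ₁(β) = e^{βJ₁}`, beyond some `β₀ > 0` the quadratic `Q_β` has two
distinct positive roots `u₂*(β) < u₁*(β)` with product `2(θ(β)+1)/θ(β)`, and as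
`β → ∞` one has `u₁*(β) → ∞` and `u₂*(β) → 0`. -/
theorem potts_roots_low_temperature_limit (J J₁ : ℝ) (hJ : 0 < J) (hJ₁ : 0 < J₁) :
    let θ : ℝ → ℝ := fun β => Real.exp (β * J)
    let θ₁ : ℝ → ℝ := fun β => Real.exp (β * J₁)
    let Q : ℝ → ℝ → ℝ := fun β u =>
      θ β * u ^ 2 + (θ₁ β + 1) * (θ β * (1 - θ₁ β) + 2) * u + 2 * (θ β + 1)
    ∃ β₀ > (0 : ℝ), ∃ u₁ u₂ : ℝ → ℝ,
      (∀ β > β₀, 0 < u₂ β ∧ u₂ β < u₁ β ∧ Q β (u₂ β) = 0 ∧ Q β (u₁ β) = 0 ∧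
        u₁ β * u₂ β = 2 * (θ β + 1) / θ β) ∧
      Tendsto u₁ atTop atTop ∧ Tendsto u₂ atTop (nhds 0) := by
  intro θ θ₁ Q
  have hθ : Tendsto θ atTop atTop := Real.tendsto_exp_atTop.comp (tendsto_id.atTop_mul_const hJ)
  have hθ₁ : Tendsto θ₁ atTop atTop :=
    Real.tendsto_exp_atTop.comp (tendsto_id.atTop_mul_const hJ₁)
  have hlarge : ∀ᶠ β in atTop, 1 ≤ θ β ∧ 4 ≤ θ₁ β :=
    (hθ.eventually_ge_atTop 1).and (hθ₁.eventually_ge_atTop 4)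
  let u₁ β := largeRoot (θ β) (pottsLinearCoeff (θ β) (θ₁ β)) (2 * (θ β + 1))
  let u₂ β := smallRoot (θ β) (pottsLinearCoeff (θ β) (θ₁ β)) (2 * (θ β + 1))
  have hu₁ : Tendsto u₁ atTop atTop := by
    refine tendsto_atTop_mono' _ ?_ (tendsto_atTop_add_const_right _ (-3) hθ₁)
    filter_upwards [hlarge] with β ⟨h1, h4⟩
    exact sub_three_le_pottsLargeRoot h1 (by linarith)
  obtain ⟨N, hN⟩ := eventually_atTop.1 hlarge
  refine ⟨max N 1, by positivity, u₁, u₂, fun β hβ => ?_, hu₁, ?_⟩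
  · obtain ⟨h1, h4⟩ := hN β (lt_of_le_of_lt (le_max_left _ _) hβ).le
    exact quadratic_roots_spec (by linarith) (pottsLinearCoeff_neg h1 h4) (by linarith)
      (pottsLinearCoeff_discrim_pos h1 h4)
  · refine tendsto_of_tendsto_of_tendsto_of_le_of_le' tendsto_const_nhds
      ((tendsto_const_nhds (x := (4 : ℝ))).div_atTop hu₁) ?_ ?_
    · filter_upwards [hlarge] with β ⟨h1, h4⟩
      exact (smallRoot_pos (by linarith) (pottsLinearCoeff_neg h1 h4) (by linarith)).le
    · filter_upwards [hlarge] with β ⟨h1, h4⟩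
      exact pottsSmallRoot_le_four_div h1 h4
end
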